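/- If the sequent Γ ⊃ Δ is derivable in the sequent calculus G, then Γ ⊢ ⋁Δ in natural deduction, where ⋁Δ is the right-nested disjunction of the formulas in Δ ending in ⊥. -/

import Mathlib

/-!
Induction on the `G`-derivation, reading a succedent `Δ` as the disjunction `BigOr Δ`. The left
rules are admissible in natural deduction as they stand. For a right rule, eliminate the
disjunction of the premise and re-introduce each disjunct, the principal formulas being replaced
by the principal formula of the conclusion. A cut is a disjunction elimination on `A ∨ ⋁Δ`, and
the only classical step is `ImpR`, which splits on `A ∨ ¬A`.
-/

inductive PropF (V : Type) : Type
  | Var : V → PropF V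
  | Bot : PropF V
  | Conj : PropF V → PropF V → PropF V
  | Disj : PropF V → PropF V → PropF V
  | Impl : PropF V → PropF V → PropF V
deriving DecidableEq

variable {V : Type} [DecidableEq V]

def PropF.Neg (A : PropF V) : PropF V := A.Impl .Bot
def PropF.Top : PropF V := PropF.Neg .Bot

def TrueQ (v : V → Bool) : PropF V → Bool
  | .Var p => v p
  | .Bot => false
  | .Conj B C => TrueQ v B && TrueQ v C
  | .Disj B C => TrueQ v B || TrueQ v C
  | .Impl B C => !(TrueQ v B) || TrueQ v C

def Satisfies (v : V → Bool) (Γ : List (PropF V)) : Prop := ∀ A ∈ Γ, TrueQ v A = true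
def Models (Γ : List (PropF V)) (A : PropF V) : Prop := ∀ v, Satisfies v Γ → TrueQ v A = true
def Valid (A : PropF V) : Prop := Models [] A
def Validates (v : V → Bool) (Δ : List (PropF V)) : Prop := ∃ A ∈ Δ, TrueQ v A = true

inductive Nc : List (PropF V) → PropF V → Prop
  | Nax (Γ : List (PropF V)) (A : PropF V) : A ∈ Γ → Nc Γ A
  | ImpI (Γ : List (PropF V)) (A B : PropF V) : Nc (A :: Γ) B → Nc Γ (A.Impl B)
  | ImpE (Γ : List (PropF V)) (A B : PropF V) : Nc Γ (A.Impl B) → Nc Γ A → Nc Γ B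
  | BotC (Γ : List (PropF V)) (A : PropF V) : Nc (A.Neg :: Γ) .Bot → Nc Γ A
  | AndI (Γ : List (PropF V)) (A B : PropF V) : Nc Γ A → Nc Γ B → Nc Γ (A.Conj B)
  | AndE1 (Γ : List (PropF V)) (A B : PropF V) : Nc Γ (A.Conj B) → Nc Γ A
  | AndE2 (Γ : List (PropF V)) (A B : PropF V) : Nc Γ (A.Conj B) → Nc Γ B
  | OrI1 (Γ : List (PropF V)) (A B : PropF V) : Nc Γ A → Nc Γ (A.Disj B)
  | OrI2 (Γ : List (PropF V)) (A B : PropF V) : Nc Γ B → Nc Γ (A.Disj B)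
  | OrE (Γ : List (PropF V)) (A B C : PropF V) : Nc Γ (A.Disj B) → Nc (A :: Γ) C → Nc (B :: Γ) C → Nc Γ C

def Provable (A : PropF V) : Prop := Nc [] A

inductive NNF (V : Type) : Type
  | NPos : V → NNF V
  | NNeg : V → NNF V
  | NBot : NNF V
  | NTop : NNF V
  | NConj : NNF V → NNF V → NNF V
  | NDisj : NNF V → NNF V → NNF V
deriving DecidableEq

def NNFtoPropF : NNF V → PropF V
  | .NPos p => .Var p
  | .NNeg p => (PropF.Var p).Neg
  | .NBot => .Bot
  | .NTop => PropF.Top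
  | .NConj B C => (NNFtoPropF B).Conj (NNFtoPropF C)
  | .NDisj B C => (NNFtoPropF B).Disj (NNFtoPropF C)

mutual
def MakeNNF : PropF V → NNF V
  | .Var p => .NPos p
  | .Bot => .NBot
  | .Disj B C => .NDisj (MakeNNF B) (MakeNNF C)
  | .Conj B C => .NConj (MakeNNF B) (MakeNNF C)
  | .Impl B C => .NDisj (MakeNNFN B) (MakeNNF C)
def MakeNNFN : PropF V → NNF V
  | .Var p => .NNeg p
  | .Bot => .NTop
  | .Disj B C => .NConj (MakeNNFN B) (MakeNNFN C)
  | .Conj B C => .NDisj (MakeNNFN B) (MakeNNFN C)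
  | .Impl B C => .NConj (MakeNNF B) (MakeNNFN C)
end

inductive Lit (V : Type) : Type
  | LPos : V → Lit V
  | LNeg : V → Lit V
  | LBot : Lit V
  | LTop : Lit V
deriving DecidableEq

def LiteraltoPropF : Lit V → PropF V
  | .LPos p => .Var p
  | .LNeg p => (PropF.Var p).Neg
  | .LBot => .Bot
  | .LTop => PropF.Top

abbrev Clause (V : Type) : Type := List (Lit V)
abbrev CNF (V : Type) : Type := List (Clause V)

abbrev ClausetoPropF (l : Clause V) : PropF V :=
  l.foldr (fun a r => (LiteraltoPropF a).Disj r) .Bot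

def CNFtoPropF (ll : CNF V) : PropF V :=
  ll.foldr (fun c r => (ClausetoPropF c).Conj r) PropF.Top

def AddClause (l : Clause V) (ll : CNF V) : CNF V := ll.map (fun l2 => l ++ l2)
def Disjunct (ll ll2 : CNF V) : CNF V := ll.flatMap (fun l => AddClause l ll2)

def MakeCNF : NNF V → CNF V
  | .NPos p => [[.LPos p]]
  | .NNeg p => [[.LNeg p]]
  | .NBot => [[.LBot]]
  | .NTop => [[.LTop]]
  | .NConj B C => MakeCNF B ++ MakeCNF C
  | .NDisj B C => Disjunct (MakeCNF B) (MakeCNF C)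

def Valid_Clause (l : Clause V) : Prop :=
  Lit.LTop ∈ l ∨ ∃ p, Lit.LPos p ∈ l ∧ Lit.LNeg p ∈ l
def Valid_CNF (ll : CNF V) : Prop := ∀ l ∈ ll, Valid_Clause l

inductive AxiomH : PropF V → Prop
  | HOrI1 (A B : PropF V) : AxiomH (A.Impl (A.Disj B))
  | HOrI2 (A B : PropF V) : AxiomH (B.Impl (A.Disj B))
  | HAndI (A B : PropF V) : AxiomH (A.Impl (B.Impl (A.Conj B)))
  | HOrE (A B C : PropF V) : AxiomH ((A.Disj B).Impl ((A.Impl C).Impl ((B.Impl C).Impl C)))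
  | HAndE1 (A B : PropF V) : AxiomH ((A.Conj B).Impl A)
  | HAndE2 (A B : PropF V) : AxiomH ((A.Conj B).Impl B)
  | HS (A B C : PropF V) : AxiomH ((A.Impl (B.Impl C)).Impl ((A.Impl B).Impl (A.Impl C)))
  | HK (A B : PropF V) : AxiomH (A.Impl (B.Impl A))
  | HClas (A : PropF V) : AxiomH ((A.Neg.Neg).Impl A)

inductive Hc : List (PropF V) → PropF V → Prop
  | Hass (A : PropF V) (Γ : List (PropF V)) : A ∈ Γ → Hc Γ A
  | Hax (A : PropF V) (Γ : List (PropF V)) : AxiomH A → Hc Γ A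
  | HImpE (Γ : List (PropF V)) (A B : PropF V) : Hc Γ (A.Impl B) → Hc Γ A → Hc Γ B

inductive G : List (PropF V) → List (PropF V) → Prop
  | Gax (A : PropF V) (Γ Δ : List (PropF V)) : A ∈ Γ → A ∈ Δ → G Γ Δ
  | GBot (Γ Δ : List (PropF V)) : PropF.Bot ∈ Γ → G Γ Δ
  | AndL (A B : PropF V) (Γ1 Γ2 Δ : List (PropF V)) : G (Γ1 ++ A :: B :: Γ2) Δ → G (Γ1 ++ (A.Conj B) :: Γ2) Δ
  | AndR (A B : PropF V) (Γ Δ1 Δ2 : List (PropF V)) : G Γ (Δ1 ++ A :: Δ2) → G Γ (Δ1 ++ B :: Δ2) → G Γ (Δ1 ++ (A.Conj B) :: Δ2)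
  | OrL (A B : PropF V) (Γ1 Γ2 Δ : List (PropF V)) : G (Γ1 ++ A :: Γ2) Δ → G (Γ1 ++ B :: Γ2) Δ → G (Γ1 ++ (A.Disj B) :: Γ2) Δ
  | OrR (A B : PropF V) (Γ Δ1 Δ2 : List (PropF V)) : G Γ (Δ1 ++ A :: B :: Δ2) → G Γ (Δ1 ++ (A.Disj B) :: Δ2)
  | ImpL (A B : PropF V) (Γ1 Γ2 Δ : List (PropF V)) : G (Γ1 ++ B :: Γ2) Δ → G (Γ1 ++ Γ2) (A :: Δ) → G (Γ1 ++ (A.Impl B) :: Γ2) Δ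
  | ImpR (A B : PropF V) (Γ Δ1 Δ2 : List (PropF V)) : G (A :: Γ) (Δ1 ++ B :: Δ2) → G Γ (Δ1 ++ (A.Impl B) :: Δ2)
  | Cut (A : PropF V) (Γ Δ : List (PropF V)) : G Γ (A :: Δ) → G (A :: Γ) Δ → G Γ Δ

inductive Gcf : List (PropF V) → List (PropF V) → Prop
  | Gax (p : V) (Γ Δ : List (PropF V)) : PropF.Var p ∈ Γ → PropF.Var p ∈ Δ → Gcf Γ Δ
  | GBot (Γ Δ : List (PropF V)) : PropF.Bot ∈ Γ → Gcf Γ Δ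
  | AndL (A B : PropF V) (Γ1 Γ2 Δ : List (PropF V)) : Gcf (Γ1 ++ A :: B :: Γ2) Δ → Gcf (Γ1 ++ (A.Conj B) :: Γ2) Δ
  | AndR (A B : PropF V) (Γ Δ1 Δ2 : List (PropF V)) : Gcf Γ (Δ1 ++ A :: Δ2) → Gcf Γ (Δ1 ++ B :: Δ2) → Gcf Γ (Δ1 ++ (A.Conj B) :: Δ2)
  | OrL (A B : PropF V) (Γ1 Γ2 Δ : List (PropF V)) : Gcf (Γ1 ++ A :: Γ2) Δ → Gcf (Γ1 ++ B :: Γ2) Δ → Gcf (Γ1 ++ (A.Disj B) :: Γ2) Δ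
  | OrR (A B : PropF V) (Γ Δ1 Δ2 : List (PropF V)) : Gcf Γ (Δ1 ++ A :: B :: Δ2) → Gcf Γ (Δ1 ++ (A.Disj B) :: Δ2)
  | ImpL (A B : PropF V) (Γ1 Γ2 Δ : List (PropF V)) : Gcf (Γ1 ++ B :: Γ2) Δ → Gcf (Γ1 ++ Γ2) (A :: Δ) → Gcf (Γ1 ++ (A.Impl B) :: Γ2) Δ
  | ImpR (A B : PropF V) (Γ Δ1 Δ2 : List (PropF V)) : Gcf (A :: Γ) (Δ1 ++ B :: Δ2) → Gcf Γ (Δ1 ++ (A.Impl B) :: Δ2)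

def BigOr (Δ : List (PropF V)) : PropF V := Δ.foldr PropF.Disj .Bot

def size : PropF V → Nat
  | .Var _ => 0
  | .Bot => 0
  | .Conj B C => (size B + size C).succ
  | .Disj B C => (size B + size C).succ
  | .Impl B C => (size B + size C).succ

def sizel (Γ : List (PropF V)) : Nat := (Γ.map size).sum
def sizes (Γ Δ : List (PropF V)) : Nat := sizel Γ + sizel Δ

namespace Nc

variable {V : Type} {Γ Γ' Δ Δ₁ Δ₂ Θ Γ₁ Γ₂ : List (PropF V)} {A B C : PropF V}

theorem weaken (h : Nc Γ A) (hs : Γ ⊆ Γ') : Nc Γ' A := by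
  induction h generalizing Γ' with
  | Nax _ _ hA => exact Nax _ _ (hs hA)
  | ImpI _ _ _ _ ih => exact ImpI _ _ _ (ih (List.cons_subset_cons _ hs))
  | ImpE _ _ _ _ _ ih₁ ih₂ => exact ImpE _ _ _ (ih₁ hs) (ih₂ hs)
  | BotC _ _ _ ih => exact BotC _ _ (ih (List.cons_subset_cons _ hs))
  | AndI _ _ _ _ _ ih₁ ih₂ => exact AndI _ _ _ (ih₁ hs) (ih₂ hs)
  | AndE1 _ _ _ _ ih => exact AndE1 _ _ _ (ih hs)
  | AndE2 _ _ _ _ ih => exact AndE2 _ _ _ (ih hs)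
  | OrI1 _ _ _ _ ih => exact OrI1 _ _ _ (ih hs)
  | OrI2 _ _ _ _ ih => exact OrI2 _ _ _ (ih hs)
  | OrE _ _ _ _ _ _ _ ih₁ ih₂ ih₃ =>
      exact OrE _ _ _ _ (ih₁ hs) (ih₂ (List.cons_subset_cons _ hs))
        (ih₃ (List.cons_subset_cons _ hs))

theorem weaken_cons (h : Nc Γ A) : Nc (B :: Γ) A :=
  h.weaken (List.subset_cons_self _ _)

theorem head : Nc (A :: Γ) A :=
  Nax _ _ List.mem_cons_self

theorem cut (hA : Nc Γ A) (h : Nc (A :: Γ) C) : Nc Γ C :=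
  ImpE _ _ _ (ImpI _ _ _ h) hA

theorem exfalso (h : Nc Γ .Bot) : Nc Γ A :=
  BotC _ _ h.weaken_cons

theorem em (Γ : List (PropF V)) (A : PropF V) : Nc Γ (A.Disj A.Neg) := by
  have hnot : Nc ((A.Disj A.Neg).Neg :: Γ) (A.Disj A.Neg).Neg := head
  refine BotC _ _ (ImpE _ _ _ hnot (OrI2 _ _ _ (ImpI _ _ _ ?_)))
  exact ImpE _ _ _ hnot.weaken_cons (OrI1 _ _ _ head)

theorem bigOr_intro (hA : A ∈ Δ) (h : Nc Γ A) : Nc Γ (BigOr Δ) := by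
  induction Δ with
  | nil => cases hA
  | cons B Δ ih =>
      rcases List.mem_cons.mp hA with rfl | hA
      · exact OrI1 _ _ _ h
      · exact OrI2 _ _ _ (ih hA)

theorem bigOr_elim (h : Nc Γ (BigOr Δ)) (hcase : ∀ A ∈ Δ, Nc (A :: Γ) C) : Nc Γ C := by
  induction Δ generalizing Γ with
  | nil => exact exfalso h
  | cons B Δ ih =>
      refine OrE _ _ _ _ h (hcase B List.mem_cons_self) (ih head fun A hA => ?_)
      exact (hcase A (List.mem_cons_of_mem _ hA)).weaken
        (List.cons_subset_cons _ (List.subset_cons_self _ _))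

theorem bigOr_replace (h : Nc Γ (BigOr (Δ₁ ++ (Θ ++ Δ₂))))
    (hΘ : ∀ A ∈ Θ, Nc (A :: Γ) (BigOr (Δ₁ ++ B :: Δ₂))) :
    Nc Γ (BigOr (Δ₁ ++ B :: Δ₂)) := by
  refine bigOr_elim h fun A hA => ?_
  rcases List.mem_append.mp hA with hA | hA
  · exact bigOr_intro (by simp [hA]) head
  rcases List.mem_append.mp hA with hA | hA
  · exact hΘ A hA
  · exact bigOr_intro (by simp [hA]) head

theorem andL (h : Nc (Γ₁ ++ A :: B :: Γ₂) C) : Nc (Γ₁ ++ A.Conj B :: Γ₂) C := by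
  have hAB : Nc (Γ₁ ++ A.Conj B :: Γ₂) (A.Conj B) := Nax _ _ (by simp)
  refine cut (AndE1 _ _ _ hAB) (cut (AndE2 _ _ _ hAB.weaken_cons) (h.weaken ?_))
  intro x; simp only [List.mem_append, List.mem_cons]; tauto

theorem orL (hA : Nc (Γ₁ ++ A :: Γ₂) C) (hB : Nc (Γ₁ ++ B :: Γ₂) C) :
    Nc (Γ₁ ++ A.Disj B :: Γ₂) C := by
  refine OrE _ _ _ _ (Nax _ (A.Disj B) (by simp)) (hA.weaken ?_) (hB.weaken ?_) <;>
  · intro x; simp only [List.mem_append, List.mem_cons]; tauto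

theorem impL (hB : Nc (Γ₁ ++ B :: Γ₂) C) (hA : Nc (Γ₁ ++ Γ₂) (A.Disj C)) :
    Nc (Γ₁ ++ A.Impl B :: Γ₂) C := by
  have hAB : Nc (Γ₁ ++ A.Impl B :: Γ₂) (A.Impl B) := Nax _ _ (by simp)
  refine OrE _ _ _ _ (hA.weaken ?_) (cut (ImpE _ _ _ hAB.weaken_cons head) (hB.weaken ?_)) head <;>
  · intro x; simp only [List.mem_append, List.mem_cons]; tauto

theorem andR (hA : Nc Γ (BigOr (Δ₁ ++ A :: Δ₂))) (hB : Nc Γ (BigOr (Δ₁ ++ B :: Δ₂))) :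
    Nc Γ (BigOr (Δ₁ ++ A.Conj B :: Δ₂)) := by
  refine bigOr_replace (Θ := [A]) hA (List.forall_mem_singleton.mpr ?_)
  refine bigOr_replace (Θ := [B]) hB.weaken_cons (List.forall_mem_singleton.mpr ?_)
  exact bigOr_intro (by simp) (AndI _ _ _ head.weaken_cons head)

theorem orR (h : Nc Γ (BigOr (Δ₁ ++ A :: B :: Δ₂))) :
    Nc Γ (BigOr (Δ₁ ++ A.Disj B :: Δ₂)) := by
  refine bigOr_replace (Θ := [A, B]) h
    (List.forall_mem_cons.mpr ⟨?_, List.forall_mem_singleton.mpr ?_⟩)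
  exacts [bigOr_intro (A := A.Disj B) (by simp) (OrI1 _ _ _ head),
    bigOr_intro (A := A.Disj B) (by simp) (OrI2 _ _ _ head)]

/-- Classical case split on `A`: under `A` the premise gives `B`, under `¬A` the implication
holds vacuously. -/
theorem impR (h : Nc (A :: Γ) (BigOr (Δ₁ ++ B :: Δ₂))) :
    Nc Γ (BigOr (Δ₁ ++ A.Impl B :: Δ₂)) := by
  refine OrE _ _ _ _ (em Γ A) ?_ ?_
  · refine bigOr_replace (Θ := [B]) h (List.forall_mem_singleton.mpr ?_)
    exact bigOr_intro (A := A.Impl B) (by simp) (ImpI _ _ _ head.weaken_cons)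
  · refine bigOr_intro (A := A.Impl B) (by simp) (ImpI _ _ _ (exfalso ?_))
    exact ImpE _ _ _ head.weaken_cons head

end Nc

theorem stmt12 {V : Type} [DecidableEq V] (Γ Δ : List (PropF V)) (h : G Γ Δ) :
    Nc Γ (BigOr Δ) := by
  induction h with
  | Gax _ _ _ hΓ hΔ => exact Nc.bigOr_intro hΔ (Nc.Nax _ _ hΓ)
  | GBot _ _ hΓ => exact Nc.exfalso (Nc.Nax _ _ hΓ)
  | AndL _ _ _ _ _ _ ih => exact Nc.andL ih
  | AndR _ _ _ _ _ _ _ ih₁ ih₂ => exact Nc.andR ih₁ ih₂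
  | OrL _ _ _ _ _ _ _ ih₁ ih₂ => exact Nc.orL ih₁ ih₂
  | OrR _ _ _ _ _ _ ih => exact Nc.orR ih
  | ImpL _ _ _ _ _ _ _ ih₁ ih₂ => exact Nc.impL ih₁ ih₂
  | ImpR _ _ _ _ _ _ ih => exact Nc.impR ih
  | Cut _ _ _ _ _ ih₁ ih₂ => exact Nc.OrE _ _ _ _ ih₁ ih₂ Nc.head
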